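/- For every weighted digraph G with Kirchhoff matrix L and normalized matrix of maximum out forests J̄, one has L·J̄ = J̄·L = 0. -/

import Mathlib

open scoped Classical
open Finset

variable {n : ℕ}

/-- The arc relation of a finite arc set. -/
def arcRel (F : Finset (Fin n × Fin n)) : Fin n → Fin n → Prop :=
  fun a b => (a, b) ∈ F

/-- A diverging forest: no directed cycles, and every vertex has in-degree at most 1. -/
def IsDivForest (F : Finset (Fin n × Fin n)) : Prop :=
  (∀ v, ¬ Relation.TransGen (arcRel F) v v) ∧
  ∀ w z₁ z₂, (z₁, w) ∈ F → (z₂, w) ∈ F → z₁ = z₂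

/-- `F` is a spanning diverging forest of the weighted digraph whose arcs are the
pairs of positive weight under `ε`. -/
def IsSpForest (ε : Fin n → Fin n → ℝ) (F : Finset (Fin n × Fin n)) : Prop :=
  (∀ p ∈ F, 0 < ε p.1 p.2) ∧ IsDivForest F

/-- The weight of a forest: the product of its arc weights. -/
noncomputable def fweight (ε : Fin n → Fin n → ℝ) (F : Finset (Fin n × Fin n)) : ℝ :=
  ∏ p ∈ F, ε p.1 p.2

/-- The weight of a set of forests: the sum of the weights of its members. -/
noncomputable def swt (ε : Fin n → Fin n → ℝ)
    (S : Finset (Finset (Fin n × Fin n))) : ℝ :=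
  ∑ F ∈ S, fweight ε F

/-- The set of spanning diverging forests with `k` arcs. -/
noncomputable def forestsK (ε : Fin n → Fin n → ℝ) (k : ℕ) :
    Finset (Finset (Fin n × Fin n)) :=
  Finset.univ.filter (fun F => IsSpForest ε F ∧ F.card = k)

/-- The set of spanning diverging forests with `k` arcs in which vertex `i` belongs to
the tree diverging from `j` (so `j` is a root and `i` is reachable from `j`). -/
noncomputable def forestsKji (ε : Fin n → Fin n → ℝ) (k : ℕ) (j i : Fin n) :
    Finset (Finset (Fin n × Fin n)) :=
  (forestsK ε k).filter (fun F => (∀ u, (u, j) ∉ F) ∧ Relation.ReflTransGen (arcRel F) j i)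

/-- The maximum number of arcs in a spanning diverging forest, equal to `n - v`
where `v` is the forest dimension. -/
noncomputable def maxArcs (ε : Fin n → Fin n → ℝ) : ℕ :=
  (Finset.univ.filter (fun F : Finset (Fin n × Fin n) => IsSpForest ε F)).sup Finset.card

/-- The Kirchhoff matrix of the weighted digraph with weights `ε`. -/
noncomputable def Kirchhoff (ε : Fin n → Fin n → ℝ) : Matrix (Fin n) (Fin n) ℝ :=
  Matrix.of fun i j =>
    if i = j then ∑ k ∈ Finset.univ.filter (· ≠ i), ε k i else - ε j i

/-- The matrix of maximum out forests: entry `(i, j)` is the total weight of maximum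
out forests in which `i` lies in the tree diverging from `j`. -/
noncomputable def Qmax (ε : Fin n → Fin n → ℝ) : Matrix (Fin n) (Fin n) ℝ :=
  Matrix.of fun i j => swt ε (forestsKji ε (maxArcs ε) j i)

/-- The normalized matrix of maximum out forests. -/
noncomputable def Jbar (ε : Fin n → Fin n → ℝ) : Matrix (Fin n) (Fin n) ℝ :=
  (swt ε (forestsK ε (maxArcs ε)))⁻¹ • Qmax ε

section Helpers

variable {F F' : Finset (Fin n × Fin n)} {a b c x y : Fin n}

lemma reach_mono (h : F ⊆ F') (hab : Relation.ReflTransGen (arcRel F) a b) :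
    Relation.ReflTransGen (arcRel F') a b :=
  Relation.ReflTransGen.mono (fun _ _ hx => h hx) _ _ hab

lemma trans_mono (h : F ⊆ F') (hab : Relation.TransGen (arcRel F) a b) :
    Relation.TransGen (arcRel F') a b :=
  Relation.TransGen.mono (fun _ _ hx => h hx) _ _ hab

/-- A path avoiding an arc whose source is not reachable from `a`. -/
lemma reach_erase_src (hab : Relation.ReflTransGen (arcRel F) a b)
    (hx : ¬ Relation.ReflTransGen (arcRel F) a x) :
    Relation.ReflTransGen (arcRel (F.erase (x, y))) a b := by
  induction hab with
  | refl => exact .refl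
  | @tail c d h1 h2 ih =>
    rcases eq_or_ne ((c, d) : Fin n × Fin n) (x, y) with he | he
    · rw [Prod.mk.injEq] at he
      obtain ⟨rfl, rfl⟩ := he
      exact absurd h1 hx
    · exact ih.tail (Finset.mem_erase.2 ⟨he, h2⟩)

/-- A path avoiding an arc whose target cannot reach `b`. -/
lemma reach_erase_tgt (hab : Relation.ReflTransGen (arcRel F) a b) :
    ¬ Relation.ReflTransGen (arcRel F) y b →
    Relation.ReflTransGen (arcRel (F.erase (x, y))) a b := by
  induction hab with
  | refl => exact fun _ => .refl
  | @tail c d h1 h2 ih =>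
    intro hy
    rcases eq_or_ne ((c, d) : Fin n × Fin n) (x, y) with he | he
    · rw [Prod.mk.injEq] at he
      obtain ⟨rfl, rfl⟩ := he
      exact absurd Relation.ReflTransGen.refl hy
    · exact (ih (fun hyc => hy (hyc.tail h2))).tail (Finset.mem_erase.2 ⟨he, h2⟩)

lemma transGen_insert (h : Relation.TransGen (arcRel (insert (x, y) F)) a b) :
    Relation.TransGen (arcRel F) a b ∨
      (Relation.ReflTransGen (arcRel F) a x ∧ Relation.ReflTransGen (arcRel F) y b) := by
  induction h with
  | @single c h1 =>
    rcases Finset.mem_insert.1 h1 with he | hm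
    · rw [Prod.mk.injEq] at he
      obtain ⟨rfl, rfl⟩ := he
      exact Or.inr ⟨.refl, .refl⟩
    · exact Or.inl (.single hm)
  | @tail c d h1 h2 ih =>
    rcases Finset.mem_insert.1 h2 with he | hm
    · rw [Prod.mk.injEq] at he
      obtain ⟨rfl, rfl⟩ := he
      rcases ih with h | ⟨hax, hyc⟩
      · exact Or.inr ⟨h.to_reflTransGen, .refl⟩
      · exact Or.inr ⟨hax, .refl⟩
    · rcases ih with h | ⟨hax, hyc⟩
      · exact Or.inl (h.tail hm)
      · exact Or.inr ⟨hax, hyc.tail hm⟩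

lemma acyclic_insert (hF : ∀ v, ¬ Relation.TransGen (arcRel F) v v)
    (hnr : ¬ Relation.ReflTransGen (arcRel F) y x) :
    ∀ v, ¬ Relation.TransGen (arcRel (insert (x, y) F)) v v := by
  intro v hv
  rcases transGen_insert hv with h | ⟨hvx, hyv⟩
  · exact hF v h
  · exact hnr (hyv.trans hvx)

/-- Ancestors of a common vertex are comparable. -/
lemma reach_chain (hfun : ∀ w z₁ z₂, (z₁, w) ∈ F → (z₂, w) ∈ F → z₁ = z₂)
    (hbc : Relation.ReflTransGen (arcRel F) b c) :
    ∀ a, Relation.ReflTransGen (arcRel F) a c →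
      Relation.ReflTransGen (arcRel F) a b ∨ Relation.ReflTransGen (arcRel F) b a := by
  induction hbc with
  | refl => exact fun a ha => Or.inl ha
  | @tail d e h1 h2 ih =>
    intro a hac
    rcases hac.cases_tail with rfl | ⟨f, haf, hfe⟩
    · exact Or.inr (h1.tail h2)
    · have : f = d := hfun e f d hfe h2
      exact ih a (this ▸ haf)

/-- If `j` is a root, anything reaching `j` equals `j`. -/
lemma eq_of_reach_root (hroot : ∀ u, (u, b) ∉ F)
    (h : Relation.ReflTransGen (arcRel F) a b) : a = b := by
  rcases h.cases_tail with rfl | ⟨f, _, hfb⟩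
  · rfl
  · exact absurd hfb (hroot f)

end Helpers

section Helpers2

noncomputable def maxArcs' (ε : Fin n → Fin n → ℝ) : ℕ :=
  (Finset.univ.filter (fun F : Finset (Fin n × Fin n) => IsSpForest ε F)).sup Finset.card

variable {ε : Fin n → Fin n → ℝ} {F F' : Finset (Fin n × Fin n)} {a b x y u v : Fin n}

lemma card_le_max (h : IsSpForest ε F) : F.card ≤ maxArcs' ε :=
  Finset.le_sup (Finset.mem_filter.2 ⟨Finset.mem_univ F, h⟩)

lemma erase_divForest (h : IsDivForest F) (p : Fin n × Fin n) : IsDivForest (F.erase p) :=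
  ⟨fun v hv => h.1 v (trans_mono (Finset.erase_subset _ _) hv),
   fun w z₁ z₂ h₁ h₂ => h.2 w z₁ z₂ (Finset.mem_of_mem_erase h₁) (Finset.mem_of_mem_erase h₂)⟩

/-- Inserting an arc `(x,y)` where `y` has no in-arc and `y` cannot reach `x`. -/
lemma spForest_insert (hF : IsSpForest ε F) (hpos : 0 < ε x y)
    (hroot : ∀ z, (z, y) ∉ F) (hnr : ¬ Relation.ReflTransGen (arcRel F) y x) :
    IsSpForest ε (insert (x, y) F) := by
  refine ⟨?_, acyclic_insert hF.2.1 hnr, ?_⟩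
  · intro p hp
    rcases Finset.mem_insert.1 hp with rfl | hp
    · exact hpos
    · exact hF.1 p hp
  · intro w z₁ z₂ h₁ h₂
    rcases Finset.mem_insert.1 h₁ with he₁ | h₁ <;> rcases Finset.mem_insert.1 h₂ with he₂ | h₂
    · rw [Prod.mk.injEq] at he₁ he₂; rw [he₁.1, he₂.1]
    · rw [Prod.mk.injEq] at he₁; exact absurd (he₁.2 ▸ h₂) (hroot z₂)
    · rw [Prod.mk.injEq] at he₂; exact absurd (he₂.2 ▸ h₁) (hroot z₁)
    · exact hF.2.2 w z₁ z₂ h₁ h₂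

/-- Replace arc `(u,v)` of `F` by a new arc `(x,y)`. -/
lemma spForest_move (hF : IsSpForest ε F) (hpos : 0 < ε x y)
    (hy : ∀ z, (z, y) ∉ F.erase (u, v))
    (hnr : ¬ Relation.ReflTransGen (arcRel (F.erase (u, v))) y x) :
    IsSpForest ε (insert (x, y) (F.erase (u, v))) := by
  have he : IsSpForest ε (F.erase (u, v)) :=
    ⟨fun p hp => hF.1 p (Finset.mem_of_mem_erase hp), erase_divForest hF.2 _⟩
  exact spForest_insert he hpos hy hnr

/-- In a maximum forest, if `y` is a root and `(x,y)` has positive weight,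
then `y` reaches `x`. -/
lemma forced_reach (hF : IsSpForest ε F) (hcard : F.card = maxArcs' ε)
    (hpos : 0 < ε x y) (hroot : ∀ z, (z, y) ∉ F) :
    Relation.ReflTransGen (arcRel F) y x := by
  by_contra hnr
  have hins : IsSpForest ε (insert (x, y) F) := spForest_insert hF hpos hroot hnr
  have hle := card_le_max hins
  rw [Finset.card_insert_of_notMem (hroot x), hcard] at hle
  omega

noncomputable def par (F : Finset (Fin n × Fin n)) (t : Fin n) : Fin n :=
  if h : ∃ p, (p, t) ∈ F then h.choose else t

lemma par_mem {t : Fin n} (h : ∃ p, (p, t) ∈ F) : (par F t, t) ∈ F := by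
  rw [par, dif_pos h]; exact h.choose_spec

lemma par_eq (hfun : ∀ w z₁ z₂, (z₁, w) ∈ F → (z₂, w) ∈ F → z₁ = z₂)
    {t z : Fin n} (hz : (z, t) ∈ F) : par F t = z :=
  hfun t (par F t) z (par_mem ⟨z, hz⟩) hz

noncomputable def chld (F : Finset (Fin n × Fin n)) (j m : Fin n) : Fin n :=
  if h : ∃ c, (j, c) ∈ F ∧ Relation.ReflTransGen (arcRel F) c m then h.choose else j

lemma chld_spec {j m : Fin n} (h : ∃ c, (j, c) ∈ F ∧ Relation.ReflTransGen (arcRel F) c m) :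
    (j, chld F j m) ∈ F ∧ Relation.ReflTransGen (arcRel F) (chld F j m) m := by
  rw [chld, dif_pos h]; exact h.choose_spec

/-- Uniqueness of the child of root `j` on the path towards `m`. -/
lemma chld_unique (hF : IsDivForest F) {j m c₁ c₂ : Fin n} (hroot : ∀ z, (z, j) ∉ F)
    (h₁ : (j, c₁) ∈ F) (r₁ : Relation.ReflTransGen (arcRel F) c₁ m)
    (h₂ : (j, c₂) ∈ F) (r₂ : Relation.ReflTransGen (arcRel F) c₂ m) : c₁ = c₂ := by
  have key : ∀ d₁ d₂ : Fin n, (j, d₁) ∈ F → (j, d₂) ∈ F →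
      Relation.ReflTransGen (arcRel F) d₁ d₂ → d₁ = d₂ := by
    intro d₁ d₂ hd₁ hd₂ hr
    rcases hr.cases_tail with rfl | ⟨e, hde, hed⟩
    · rfl
    · have hej : e = j := hF.2 d₂ e j hed hd₂
      rw [hej] at hde
      rcases hde.cases_tail with he | ⟨f, _, hfj⟩
      · exfalso; rw [← he] at hd₁; exact hF.1 j (Relation.TransGen.single hd₁)
      · exact absurd hfj (hroot f)
  rcases reach_chain hF.2 r₂ c₁ r₁ with h | h
  · exact key c₁ c₂ h₁ h₂ h
  · exact (key c₂ c₁ h₂ h₁ h).symm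

lemma chld_eq (hF : IsDivForest F) {j m c : Fin n} (hroot : ∀ z, (z, j) ∉ F)
    (hc : (j, c) ∈ F) (hr : Relation.ReflTransGen (arcRel F) c m) : chld F j m = c := by
  have h : ∃ c, (j, c) ∈ F ∧ Relation.ReflTransGen (arcRel F) c m := ⟨c, hc, hr⟩
  obtain ⟨h1, h2⟩ := chld_spec h
  exact chld_unique hF hroot h1 h2 hc hr

end Helpers2

section Swap

variable {ε : Fin n → Fin n → ℝ} {F F' : Finset (Fin n × Fin n)} {i j m k : Fin n}

lemma cycle_of_reach_arc (hac : ∀ v, ¬ Relation.TransGen (arcRel F) v v)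
    {a b : Fin n} (h : Relation.ReflTransGen (arcRel F) a b) (harc : (b, a) ∈ F) : False :=
  hac b (Relation.TransGen.head' (show arcRel F b a from harc) h)

/-- Forward swap at vertex `i` (for `L·Q = 0`). -/
lemma swapFwd (hF : IsSpForest ε F) (hcard : F.card = maxArcs' ε)
    (hroot : ∀ z, (z, j) ∉ F)
    (hji : Relation.ReflTransGen (arcRel F) j i)
    (hpos : 0 < ε m i) (hnm : ¬ Relation.ReflTransGen (arcRel F) j m) :
    (par F i, i) ∈ F ∧ 0 < ε (par F i) i ∧
    IsSpForest ε (insert (m, i) (F.erase (par F i, i))) ∧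
    (insert (m, i) (F.erase (par F i, i))).card = maxArcs' ε ∧
    (∀ z, (z, j) ∉ insert (m, i) (F.erase (par F i, i))) ∧
    Relation.ReflTransGen (arcRel (insert (m, i) (F.erase (par F i, i)))) j (par F i) ∧
    ¬ Relation.ReflTransGen (arcRel (insert (m, i) (F.erase (par F i, i)))) j i ∧
    par (insert (m, i) (F.erase (par F i, i))) i = m ∧
    insert (par F i, i) ((insert (m, i) (F.erase (par F i, i))).erase (m, i)) = F := by
  have hfun := hF.2.2
  have hac := hF.2.1
  have hij : i ≠ j := by rintro rfl; exact hnm (forced_reach hF hcard hpos hroot)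
  obtain ⟨e, hje, hei⟩ : ∃ e, Relation.ReflTransGen (arcRel F) j e ∧ (e, i) ∈ F := by
    rcases hji.cases_tail with h | h
    · exact absurd h hij
    · exact h
  have hpe : par F i = e := par_eq hfun hei
  set p := par F i with hp
  have hpmem : (p, i) ∈ F := hpe ▸ hei
  have hjp : Relation.ReflTransGen (arcRel F) j p := hpe ▸ hje
  have hppos : 0 < ε p i := hF.1 _ hpmem
  have hmp : m ≠ p := by rintro rfl; exact hnm hjp
  have hmiF : (m, i) ∉ F := fun h => hmp (hfun i m p h hpmem)
  have hnim : ¬ Relation.ReflTransGen (arcRel F) i m := fun h => hnm (hji.trans h)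
  have hyi : ∀ z, (z, i) ∉ F.erase (p, i) := by
    intro z hz
    obtain ⟨hne, hzF⟩ := Finset.mem_erase.1 hz
    exact hne (by rw [hfun i z p hzF hpmem])
  have hmiE : (m, i) ∉ F.erase (p, i) := fun h => hmiF (Finset.mem_of_mem_erase h)
  set F' := insert (m, i) (F.erase (p, i)) with hF'def
  have hsp : IsSpForest ε F' :=
    spForest_move hF hpos hyi
      (fun h => hnim (reach_mono (Finset.erase_subset _ _) h))
  have hFpos : 0 < F.card := Finset.card_pos.2 ⟨_, hpmem⟩
  have hcard' : F'.card = maxArcs' ε := by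
    rw [hF'def, Finset.card_insert_of_notMem hmiE, Finset.card_erase_of_mem hpmem]
    omega
  have herase : F'.erase (m, i) = F.erase (p, i) := Finset.erase_insert hmiE
  have hroot' : ∀ z, (z, j) ∉ F' := by
    intro z hz
    rcases Finset.mem_insert.1 hz with he | hz
    · exact hij (congrArg Prod.snd he).symm
    · exact hroot z (Finset.mem_of_mem_erase hz)
  have hjp' : Relation.ReflTransGen (arcRel F') j p := by
    refine reach_mono (Finset.subset_insert _ _) (reach_erase_tgt hjp ?_)
    intro hip
    exact cycle_of_reach_arc hac hip hpmem
  have hni' : ¬ Relation.ReflTransGen (arcRel F') j i := by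
    intro h
    obtain ⟨e', hje', hei'⟩ : ∃ e', Relation.ReflTransGen (arcRel F') j e' ∧ (e', i) ∈ F' := by
      rcases h.cases_tail with h' | h'
      · exact absurd h' hij
      · exact h'
    have he'm : e' = m := by
      rcases Finset.mem_insert.1 hei' with he | hz
      · exact congrArg Prod.fst he
      · exact absurd hz (hyi e')
    rw [he'm] at hje'
    have hjm' : Relation.ReflTransGen (arcRel (F'.erase (m, i))) j m := by
      refine reach_erase_tgt hje' ?_
      intro him
      exact cycle_of_reach_arc hsp.2.1 him (Finset.mem_insert_self _ _)
    rw [herase] at hjm'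
    exact hnm (reach_mono (Finset.erase_subset _ _) hjm')
  refine ⟨hpmem, hppos, hsp, hcard', hroot', hjp', hni',
    par_eq hsp.2.2 (Finset.mem_insert_self _ _), ?_⟩
  rw [herase, Finset.insert_erase hpmem]

/-- Inverse swap at vertex `i` (for `L·Q = 0`). -/
lemma swapInv (hF' : IsSpForest ε F') (hcard : F'.card = maxArcs' ε)
    (hroot : ∀ z, (z, j) ∉ F')
    (hjk : Relation.ReflTransGen (arcRel F') j k)
    (hpos : 0 < ε k i) (hni : ¬ Relation.ReflTransGen (arcRel F') j i) :
    (par F' i, i) ∈ F' ∧ 0 < ε (par F' i) i ∧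
    IsSpForest ε (insert (k, i) (F'.erase (par F' i, i))) ∧
    (insert (k, i) (F'.erase (par F' i, i))).card = maxArcs' ε ∧
    (∀ z, (z, j) ∉ insert (k, i) (F'.erase (par F' i, i))) ∧
    Relation.ReflTransGen (arcRel (insert (k, i) (F'.erase (par F' i, i)))) j i ∧
    ¬ Relation.ReflTransGen (arcRel (insert (k, i) (F'.erase (par F' i, i)))) j (par F' i) ∧
    par (insert (k, i) (F'.erase (par F' i, i))) i = k ∧
    insert (par F' i, i) ((insert (k, i) (F'.erase (par F' i, i))).erase (k, i)) = F' := by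
  have hfun := hF'.2.2
  have hac := hF'.2.1
  have hij : i ≠ j := by rintro rfl; exact hni .refl
  have hex : ∃ q, (q, i) ∈ F' := by
    by_contra hno
    push_neg at hno
    have hik : Relation.ReflTransGen (arcRel F') i k := forced_reach hF' hcard hpos hno
    rcases reach_chain hfun hjk i hik with h | h
    · exact hij (eq_of_reach_root hroot h)
    · exact hni h
  have hqmem : (par F' i, i) ∈ F' := par_mem hex
  set q := par F' i with hq
  have hqpos : 0 < ε q i := hF'.1 _ hqmem
  have hnik : ¬ Relation.ReflTransGen (arcRel F') i k := by
    intro h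
    rcases reach_chain hfun hjk i h with h' | h'
    · exact hij (eq_of_reach_root hroot h')
    · exact hni h'
  have hkq : k ≠ q := by rintro rfl; exact hni (hjk.tail hqmem)
  have hkiF : (k, i) ∉ F' := fun h => hkq (hfun i k q h hqmem)
  have hyi : ∀ z, (z, i) ∉ F'.erase (q, i) := by
    intro z hz
    obtain ⟨hne, hzF⟩ := Finset.mem_erase.1 hz
    exact hne (by rw [hfun i z q hzF hqmem])
  have hkiE : (k, i) ∉ F'.erase (q, i) := fun h => hkiF (Finset.mem_of_mem_erase h)
  set F := insert (k, i) (F'.erase (q, i)) with hFdef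
  have hsp : IsSpForest ε F :=
    spForest_move hF' hpos hyi
      (fun h => hnik (reach_mono (Finset.erase_subset _ _) h))
  have hF'pos : 0 < F'.card := Finset.card_pos.2 ⟨_, hqmem⟩
  have hcardF : F.card = maxArcs' ε := by
    rw [hFdef, Finset.card_insert_of_notMem hkiE, Finset.card_erase_of_mem hqmem]
    omega
  have herase : F.erase (k, i) = F'.erase (q, i) := Finset.erase_insert hkiE
  have hrootF : ∀ z, (z, j) ∉ F := by
    intro z hz
    rcases Finset.mem_insert.1 hz with he | hz
    · exact hij (congrArg Prod.snd he).symm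
    · exact hroot z (Finset.mem_of_mem_erase hz)
  have hjiF : Relation.ReflTransGen (arcRel F) j i := by
    have : Relation.ReflTransGen (arcRel (F'.erase (q, i))) j k :=
      reach_erase_tgt hjk hnik
    exact (reach_mono (Finset.subset_insert _ _) this).tail
      (show arcRel F k i from Finset.mem_insert_self _ _)
  have hniq : ¬ Relation.ReflTransGen (arcRel F) i q := by
    intro h
    have hiq : i ≠ q := by
      intro h'
      apply hac i
      exact Relation.TransGen.single (show arcRel F' i i by rw [← h'] at hqmem; exact hqmem)
    have ht : Relation.TransGen (arcRel F) i q := by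
      rcases h.cases_head with h' | ⟨c, hc, hcq⟩
      · exact absurd h' hiq
      · exact Relation.TransGen.head' hc hcq
    rcases transGen_insert ht with h' | ⟨h1, _⟩
    · exact cycle_of_reach_arc hac
        ((trans_mono (Finset.erase_subset _ _) h').to_reflTransGen) hqmem
    · exact hnik (reach_mono (Finset.erase_subset _ _) h1)
  have hnjq : ¬ Relation.ReflTransGen (arcRel F) j q := by
    intro h
    have h2 : Relation.ReflTransGen (arcRel (F.erase (k, i))) j q :=
      reach_erase_tgt h hniq
    rw [herase] at h2
    exact hni ((reach_mono (Finset.erase_subset _ _) h2).tail hqmem)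
  refine ⟨hqmem, hqpos, hsp, hcardF, hrootF, hjiF, hnjq,
    par_eq hsp.2.2 (Finset.mem_insert_self _ _), ?_⟩
  rw [herase, Finset.insert_erase hqmem]

end Swap

section Move

variable {ε : Fin n → Fin n → ℝ} {F F' : Finset (Fin n × Fin n)} {i j m k : Fin n}

/-- Forward move at root `j` (for `Q·L = 0`). -/
lemma moveFwd (hF : IsSpForest ε F) (hcard : F.card = maxArcs' ε)
    (hroot : ∀ z, (z, j) ∉ F)
    (hji : Relation.ReflTransGen (arcRel F) j i)
    (hpos : 0 < ε m j) (hmj : m ≠ j) :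
    (j, chld F j m) ∈ F ∧ 0 < ε j (chld F j m) ∧
    IsSpForest ε (insert (m, j) (F.erase (j, chld F j m))) ∧
    (insert (m, j) (F.erase (j, chld F j m))).card = maxArcs' ε ∧
    (∀ z, (z, chld F j m) ∉ insert (m, j) (F.erase (j, chld F j m))) ∧
    Relation.ReflTransGen (arcRel (insert (m, j) (F.erase (j, chld F j m)))) (chld F j m) i ∧
    par (insert (m, j) (F.erase (j, chld F j m))) j = m ∧
    insert (j, chld F j m) ((insert (m, j) (F.erase (j, chld F j m))).erase (m, j)) = F := by
  have hfun := hF.2.2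
  have hac := hF.2.1
  have hjm : Relation.ReflTransGen (arcRel F) j m := forced_reach hF hcard hpos hroot
  have hex : ∃ c, (j, c) ∈ F ∧ Relation.ReflTransGen (arcRel F) c m := by
    rcases hjm.cases_head with h | h
    · exact absurd h.symm hmj
    · exact h
  obtain ⟨hvmem, hvm⟩ := chld_spec hex
  set v := chld F j m with hv
  have hεjv : 0 < ε j v := hF.1 _ hvmem
  have hvj : v ≠ j := by
    intro h'
    apply hac j
    exact Relation.TransGen.single (show arcRel F j j by rw [h'] at hvmem; exact hvmem)
  have hnvj : ¬ Relation.ReflTransGen (arcRel F) v j := fun h =>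
    hvj (eq_of_reach_root hroot h)
  have hmjF : (m, j) ∉ F := hroot m
  have hjR : ∀ z, (z, j) ∉ F.erase (j, v) := fun z hz => hroot z (Finset.mem_of_mem_erase hz)
  have hnrRjm : ¬ Relation.ReflTransGen (arcRel (F.erase (j, v))) j m := by
    intro h
    rcases h.cases_head with h' | ⟨c, hc, hcm⟩
    · exact hmj h'.symm
    · have hcF : (j, c) ∈ F := Finset.mem_of_mem_erase hc
      have hcmF : Relation.ReflTransGen (arcRel F) c m :=
        reach_mono (Finset.erase_subset _ _) hcm
      have : v = c := by rw [hv]; exact chld_eq hF.2 hroot hcF hcmF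
      rw [← this] at hc
      exact (Finset.mem_erase.1 hc).1 rfl
  set F' := insert (m, j) (F.erase (j, v)) with hF'def
  have hsp : IsSpForest ε F' := spForest_move hF hpos hjR hnrRjm
  have hmjE : (m, j) ∉ F.erase (j, v) := fun h => hmjF (Finset.mem_of_mem_erase h)
  have hFpos : 0 < F.card := Finset.card_pos.2 ⟨_, hvmem⟩
  have hcard' : F'.card = maxArcs' ε := by
    rw [hF'def, Finset.card_insert_of_notMem hmjE, Finset.card_erase_of_mem hvmem]
    omega
  have herase : F'.erase (m, j) = F.erase (j, v) := Finset.erase_insert hmjE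
  have hroot' : ∀ z, (z, v) ∉ F' := by
    intro z hz
    rcases Finset.mem_insert.1 hz with he | hz
    · exact hvj (congrArg Prod.snd he)
    · obtain ⟨hne, hzF⟩ := Finset.mem_erase.1 hz
      exact hne (by rw [hfun v z j hzF hvmem])
  have hvi' : Relation.ReflTransGen (arcRel F') v i := by
    by_cases hvi : Relation.ReflTransGen (arcRel F) v i
    · exact reach_mono (Finset.subset_insert _ _) (reach_erase_src hvi hnvj)
    · have hjiR : Relation.ReflTransGen (arcRel (F.erase (j, v))) j i :=
        reach_erase_tgt hji hvi
      have hvmR : Relation.ReflTransGen (arcRel (F.erase (j, v))) v m :=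
        reach_erase_src hvm hnvj
      exact ((reach_mono (Finset.subset_insert _ _) hvmR).tail
        (show arcRel F' m j from Finset.mem_insert_self _ _)).trans
        (reach_mono (Finset.subset_insert _ _) hjiR)
  refine ⟨hvmem, hεjv, hsp, hcard', hroot', hvi',
    par_eq hsp.2.2 (Finset.mem_insert_self _ _), ?_⟩
  rw [herase, Finset.insert_erase hvmem]

/-- Inverse move at root `k` (for `Q·L = 0`). -/
lemma moveInv (hF' : IsSpForest ε F') (hcard : F'.card = maxArcs' ε)
    (hrootk : ∀ z, (z, k) ∉ F')
    (hki : Relation.ReflTransGen (arcRel F') k i)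
    (hpos : 0 < ε j k) (hjk : j ≠ k) :
    (par F' j, j) ∈ F' ∧ 0 < ε (par F' j) j ∧
    IsSpForest ε (insert (j, k) (F'.erase (par F' j, j))) ∧
    (insert (j, k) (F'.erase (par F' j, j))).card = maxArcs' ε ∧
    (∀ z, (z, j) ∉ insert (j, k) (F'.erase (par F' j, j))) ∧
    Relation.ReflTransGen (arcRel (insert (j, k) (F'.erase (par F' j, j)))) j i ∧
    chld (insert (j, k) (F'.erase (par F' j, j))) j (par F' j) = k ∧
    insert (par F' j, j) ((insert (j, k) (F'.erase (par F' j, j))).erase (j, k)) = F' := by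
  have hfun := hF'.2.2
  have hac := hF'.2.1
  have hkj : Relation.ReflTransGen (arcRel F') k j := forced_reach hF' hcard hpos hrootk
  have hex : ∃ q, (q, j) ∈ F' := by
    rcases hkj.cases_tail with h | ⟨e, hke, hej⟩
    · exact absurd h hjk
    · exact ⟨e, hej⟩
  have hqmem : (par F' j, j) ∈ F' := par_mem hex
  set q := par F' j with hq
  have hqpos : 0 < ε q j := hF'.1 _ hqmem
  have hkq : Relation.ReflTransGen (arcRel F') k q := by
    rcases hkj.cases_tail with h | ⟨e, hke, hej⟩
    · exact absurd h hjk
    · have : q = e := par_eq hfun hej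
      rw [this]; exact hke
  have hjkF : (j, k) ∉ F' := hrootk j
  have hjR : ∀ z, (z, k) ∉ F'.erase (q, j) := fun z hz => hrootk z (Finset.mem_of_mem_erase hz)
  have hnrRkj : ¬ Relation.ReflTransGen (arcRel (F'.erase (q, j))) k j := by
    intro h
    rcases h.cases_tail with h' | ⟨e, hke, hej⟩
    · exact hjk h'
    · have heF : (e, j) ∈ F' := Finset.mem_of_mem_erase hej
      have : e = q := hfun j e q heF hqmem
      rw [this] at hej
      exact (Finset.mem_erase.1 hej).1 rfl
  set F := insert (j, k) (F'.erase (q, j)) with hFdef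
  have hsp : IsSpForest ε F := spForest_move hF' hpos hjR hnrRkj
  have hjkE : (j, k) ∉ F'.erase (q, j) := fun h => hjkF (Finset.mem_of_mem_erase h)
  have hF'pos : 0 < F'.card := Finset.card_pos.2 ⟨_, hqmem⟩
  have hcardF : F.card = maxArcs' ε := by
    rw [hFdef, Finset.card_insert_of_notMem hjkE, Finset.card_erase_of_mem hqmem]
    omega
  have herase : F.erase (j, k) = F'.erase (q, j) := Finset.erase_insert hjkE
  have hrootF : ∀ z, (z, j) ∉ F := by
    intro z hz
    rcases Finset.mem_insert.1 hz with he | hz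
    · exact hjk (congrArg Prod.snd he)
    · obtain ⟨hne, hzF⟩ := Finset.mem_erase.1 hz
      exact hne (by rw [hfun j z q hzF hqmem])
  have hnjq : ¬ Relation.ReflTransGen (arcRel F') j q := fun h =>
    cycle_of_reach_arc hac h hqmem
  have hjiF : Relation.ReflTransGen (arcRel F) j i := by
    by_cases hji : Relation.ReflTransGen (arcRel F') j i
    · exact reach_mono (Finset.subset_insert _ _) (reach_erase_src hji hnjq)
    · have hkiR : Relation.ReflTransGen (arcRel (F'.erase (q, j))) k i :=
        reach_erase_tgt hki hji
      exact Relation.ReflTransGen.head (show arcRel F j k from Finset.mem_insert_self _ _)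
        (reach_mono (Finset.subset_insert _ _) hkiR)
  have hkqF : Relation.ReflTransGen (arcRel F) k q := by
    have : Relation.ReflTransGen (arcRel (F'.erase (q, j))) k q :=
      reach_erase_tgt hkq hnjq
    exact reach_mono (Finset.subset_insert _ _) this
  refine ⟨hqmem, hqpos, hsp, hcardF, hrootF, hjiF, ?_, ?_⟩
  · exact chld_eq hsp.2 hrootF (Finset.mem_insert_self _ _) hkqF
  · rw [herase, Finset.insert_erase hqmem]

end Move

section Sums

variable {ε : Fin n → Fin n → ℝ}

lemma mem_forestsK' {M : ℕ} {F : Finset (Fin n × Fin n)} :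
    F ∈ forestsK ε M ↔ IsSpForest ε F ∧ F.card = M := by
  simp [forestsK]

lemma mem_forestsKji' {M : ℕ} {j x : Fin n} {F : Finset (Fin n × Fin n)} :
    F ∈ forestsKji ε M j x ↔
      IsSpForest ε F ∧ F.card = M ∧ (∀ u, (u, j) ∉ F) ∧
        Relation.ReflTransGen (arcRel F) j x := by
  simp [forestsKji, forestsK, Finset.mem_filter, and_assoc]

lemma weight_move {F : Finset (Fin n × Fin n)} {a b : Fin n × Fin n}
    (hmem : a ∈ F) (hnotin : b ∉ F.erase a) :
    ε a.1 a.2 * fweight ε (insert b (F.erase a)) = ε b.1 b.2 * fweight ε F := by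
  rw [fweight, fweight, Finset.prod_insert hnotin, ← Finset.mul_prod_erase F _ hmem]
  ring

lemma sum_over_pairs (M : ℕ) (g : Fin n → Finset (Fin n × Fin n) → ℝ)
    (T : Fin n → Finset (Finset (Fin n × Fin n)))
    (hT : ∀ k, (forestsK ε M).filter (fun F => F ∈ T k) = T k) :
    ∑ k : Fin n, ∑ F ∈ T k, g k F
      = ∑ p ∈ (Finset.univ ×ˢ forestsK ε M).filter (fun p => p.2 ∈ T p.1), g p.1 p.2 := by
  rw [Finset.sum_filter, Finset.sum_product]
  refine Finset.sum_congr rfl fun k _ => ?_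
  rw [← Finset.sum_filter, hT k]

lemma filter_mem_sub {M : ℕ} {j x : Fin n} :
    (forestsK ε M).filter (fun F => F ∈ forestsKji ε M j x) = forestsKji ε M j x := by
  ext F
  simp only [Finset.mem_filter, forestsKji]
  tauto

lemma sum_filter_pos (hnonneg : ∀ a b, 0 ≤ ε a b)
    {U : Finset (Fin n × Finset (Fin n × Fin n))} {i : Fin n}
    (P : Fin n × Finset (Fin n × Fin n) → Prop) [DecidablePred P] :
    ∑ p ∈ U.filter P, ε p.1 i * fweight ε p.2
      = ∑ p ∈ U.filter (fun p => P p ∧ 0 < ε p.1 i), ε p.1 i * fweight ε p.2 := by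
  rw [← Finset.filter_filter]
  refine (Finset.sum_filter_of_ne ?_).symm
  intro p hp hne
  rcases lt_or_eq_of_le (hnonneg p.1 i) with h | h
  · exact h
  · exact absurd (by rw [← h, zero_mul]) hne

set_option maxHeartbeats 1600000 in
/-- Key identity 1 -/
lemma key1 (hnonneg : ∀ a b, 0 ≤ ε a b) (i j : Fin n) :
    ∑ k : Fin n, ε k i * swt ε (forestsKji ε (maxArcs' ε) j i)
      = ∑ k : Fin n, ε k i * swt ε (forestsKji ε (maxArcs' ε) j k) := by
  classical
  set M := maxArcs' ε with hM
  set S : Fin n → Finset (Finset (Fin n × Fin n)) := fun x => forestsKji ε M j x with hS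
  set U : Finset (Fin n × Finset (Fin n × Fin n)) := Finset.univ ×ˢ forestsK ε M with hU
  have hL : ∑ k : Fin n, ε k i * swt ε (S i)
      = ∑ p ∈ U.filter (fun p => p.2 ∈ S i), ε p.1 i * fweight ε p.2 := by
    have := sum_over_pairs (ε := ε) M (fun k F => ε k i * fweight ε F) (fun _ => S i)
      (fun _ => filter_mem_sub)
    simpa [swt, Finset.mul_sum] using this
  have hR : ∑ k : Fin n, ε k i * swt ε (S k)
      = ∑ p ∈ U.filter (fun p => p.2 ∈ S p.1), ε p.1 i * fweight ε p.2 := by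
    have := sum_over_pairs (ε := ε) M (fun k F => ε k i * fweight ε F) S
      (fun k => filter_mem_sub)
    simpa [swt, Finset.mul_sum] using this
  rw [hL, hR, sum_filter_pos hnonneg (fun p => p.2 ∈ S i),
    sum_filter_pos hnonneg (fun p => p.2 ∈ S p.1),
    ← Finset.sum_filter_add_sum_filter_not
      (U.filter fun p => p.2 ∈ S i ∧ 0 < ε p.1 i) (fun p => p.2 ∈ S p.1)
      (fun p => ε p.1 i * fweight ε p.2),
    ← Finset.sum_filter_add_sum_filter_not
      (U.filter fun p => p.2 ∈ S p.1 ∧ 0 < ε p.1 i) (fun p => p.2 ∈ S i)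
      (fun p => ε p.1 i * fweight ε p.2)]
  have hcommon : (U.filter fun p => p.2 ∈ S i ∧ 0 < ε p.1 i).filter (fun p => p.2 ∈ S p.1)
      = (U.filter fun p => p.2 ∈ S p.1 ∧ 0 < ε p.1 i).filter (fun p => p.2 ∈ S i) := by
    ext p
    simp only [Finset.mem_filter]
    tauto
  rw [hcommon]
  congr 1
  set φ : Fin n × Finset (Fin n × Fin n) → Fin n × Finset (Fin n × Fin n) :=
    fun p => (par p.2 i, insert (p.1, i) (p.2.erase (par p.2 i, i))) with hφ
  refine Finset.sum_nbij' φ φ ?_ ?_ ?_ ?_ ?_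
  · -- A → B
    intro p hp
    obtain ⟨h1, hnot⟩ := Finset.mem_filter.1 hp
    obtain ⟨hpU, hSi, hpos⟩ := Finset.mem_filter.1 h1
    obtain ⟨hF, hcard, hroot, hji⟩ := mem_forestsKji'.1 hSi
    have hnm : ¬ Relation.ReflTransGen (arcRel p.2) j p.1 :=
      fun h => hnot (mem_forestsKji'.2 ⟨hF, hcard, hroot, h⟩)
    obtain ⟨hpmem, hppos, hsp, hcard', hroot', hjp', hni', hpar', hrec⟩ :=
      swapFwd hF hcard hroot hji hpos hnm
    simp only [hφ]
    refine Finset.mem_filter.2 ⟨Finset.mem_filter.2 ⟨?_, ?_, hppos⟩, ?_⟩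
    · exact Finset.mem_product.2 ⟨Finset.mem_univ _, mem_forestsK'.2 ⟨hsp, hcard'⟩⟩
    · exact mem_forestsKji'.2 ⟨hsp, hcard', hroot', hjp'⟩
    · exact fun h => hni' (mem_forestsKji'.1 h).2.2.2
  · -- B → A
    intro p hp
    obtain ⟨h1, hnot⟩ := Finset.mem_filter.1 hp
    obtain ⟨hpU, hSp, hpos⟩ := Finset.mem_filter.1 h1
    obtain ⟨hF, hcard, hroot, hjk⟩ := mem_forestsKji'.1 hSp
    have hni : ¬ Relation.ReflTransGen (arcRel p.2) j i :=
      fun h => hnot (mem_forestsKji'.2 ⟨hF, hcard, hroot, h⟩)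
    obtain ⟨hqmem, hqpos, hsp, hcard', hroot', hji', hnjq, hpar', hrec⟩ :=
      swapInv hF hcard hroot hjk hpos hni
    simp only [hφ]
    refine Finset.mem_filter.2 ⟨Finset.mem_filter.2 ⟨?_, ?_, hqpos⟩, ?_⟩
    · exact Finset.mem_product.2 ⟨Finset.mem_univ _, mem_forestsK'.2 ⟨hsp, hcard'⟩⟩
    · exact mem_forestsKji'.2 ⟨hsp, hcard', hroot', hji'⟩
    · exact fun h => hnjq (mem_forestsKji'.1 h).2.2.2
  · -- left inverse
    intro p hp
    obtain ⟨h1, hnot⟩ := Finset.mem_filter.1 hp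
    obtain ⟨hpU, hSi, hpos⟩ := Finset.mem_filter.1 h1
    obtain ⟨hF, hcard, hroot, hji⟩ := mem_forestsKji'.1 hSi
    have hnm : ¬ Relation.ReflTransGen (arcRel p.2) j p.1 :=
      fun h => hnot (mem_forestsKji'.2 ⟨hF, hcard, hroot, h⟩)
    obtain ⟨hpmem, hppos, hsp, hcard', hroot', hjp', hni', hpar', hrec⟩ :=
      swapFwd hF hcard hroot hji hpos hnm
    simp only [hφ]
    rw [hpar', hrec]
  · -- right inverse
    intro p hp
    obtain ⟨h1, hnot⟩ := Finset.mem_filter.1 hp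
    obtain ⟨hpU, hSp, hpos⟩ := Finset.mem_filter.1 h1
    obtain ⟨hF, hcard, hroot, hjk⟩ := mem_forestsKji'.1 hSp
    have hni : ¬ Relation.ReflTransGen (arcRel p.2) j i :=
      fun h => hnot (mem_forestsKji'.2 ⟨hF, hcard, hroot, h⟩)
    obtain ⟨hqmem, hqpos, hsp, hcard', hroot', hji', hnjq, hpar', hrec⟩ :=
      swapInv hF hcard hroot hjk hpos hni
    simp only [hφ]
    rw [hpar', hrec]
  · -- values
    intro p hp
    obtain ⟨h1, hnot⟩ := Finset.mem_filter.1 hp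
    obtain ⟨hpU, hSi, hpos⟩ := Finset.mem_filter.1 h1
    obtain ⟨hF, hcard, hroot, hji⟩ := mem_forestsKji'.1 hSi
    have hnm : ¬ Relation.ReflTransGen (arcRel p.2) j p.1 :=
      fun h => hnot (mem_forestsKji'.2 ⟨hF, hcard, hroot, h⟩)
    obtain ⟨hpmem, hppos, hsp, hcard', hroot', hjp', hni', hpar', hrec⟩ :=
      swapFwd hF hcard hroot hji hpos hnm
    have hnb : (p.1, i) ∉ p.2.erase (par p.2 i, i) := by
      intro h
      obtain ⟨hne, hmemF⟩ := Finset.mem_erase.1 h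
      exact hne (by rw [hF.2.2 i p.1 (par p.2 i) hmemF hpmem])
    simp only [hφ]
    exact (weight_move hpmem hnb).symm

end Sums

section Sums2

variable {ε : Fin n → Fin n → ℝ}

lemma sum_filter_pos' {c : Fin n → ℝ} (hc : ∀ a, 0 ≤ c a)
    {U : Finset (Fin n × Finset (Fin n × Fin n))}
    (P : Fin n × Finset (Fin n × Fin n) → Prop) [DecidablePred P] :
    ∑ p ∈ U.filter P, c p.1 * fweight ε p.2
      = ∑ p ∈ U.filter (fun p => P p ∧ 0 < c p.1), c p.1 * fweight ε p.2 := by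
  rw [← Finset.filter_filter]
  refine (Finset.sum_filter_of_ne ?_).symm
  intro p hp hne
  rcases lt_or_eq_of_le (hc p.1) with h | h
  · exact h
  · exact absurd (by rw [← h, zero_mul]) hne

set_option maxHeartbeats 1600000 in
/-- Key identity 2: rows of `Qmax` are in the kernel of `L`. -/
lemma key2 (hnonneg : ∀ a b, 0 ≤ ε a b) (hloop : ∀ a, ε a a = 0) (i j : Fin n) :
    ∑ m : Fin n, ε m j * swt ε (forestsKji ε (maxArcs' ε) j i)
      = ∑ k : Fin n, ε j k * swt ε (forestsKji ε (maxArcs' ε) k i) := by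
  classical
  set M := maxArcs' ε with hM
  set U : Finset (Fin n × Finset (Fin n × Fin n)) := Finset.univ ×ˢ forestsK ε M with hU
  have hL : ∑ m : Fin n, ε m j * swt ε (forestsKji ε M j i)
      = ∑ p ∈ U.filter (fun p => p.2 ∈ forestsKji ε M j i), ε p.1 j * fweight ε p.2 := by
    have := sum_over_pairs (ε := ε) M (fun m F => ε m j * fweight ε F)
      (fun _ => forestsKji ε M j i) (fun _ => filter_mem_sub)
    simpa [swt, Finset.mul_sum] using this
  have hR : ∑ k : Fin n, ε j k * swt ε (forestsKji ε M k i)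
      = ∑ p ∈ U.filter (fun p => p.2 ∈ forestsKji ε M p.1 i), ε j p.1 * fweight ε p.2 := by
    have := sum_over_pairs (ε := ε) M (fun k F => ε j k * fweight ε F)
      (fun k => forestsKji ε M k i) (fun k => filter_mem_sub)
    simpa [swt, Finset.mul_sum] using this
  rw [hL, hR,
    sum_filter_pos' (c := fun m => ε m j) (fun a => hnonneg a j)
      (fun p => p.2 ∈ forestsKji ε M j i),
    sum_filter_pos' (c := fun k => ε j k) (fun a => hnonneg j a)
      (fun p => p.2 ∈ forestsKji ε M p.1 i)]
  set φ : Fin n × Finset (Fin n × Fin n) → Fin n × Finset (Fin n × Fin n) :=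
    fun p => (chld p.2 j p.1, insert (p.1, j) (p.2.erase (j, chld p.2 j p.1))) with hφ
  set ψ : Fin n × Finset (Fin n × Fin n) → Fin n × Finset (Fin n × Fin n) :=
    fun p => (par p.2 j, insert (j, p.1) (p.2.erase (par p.2 j, j))) with hψ
  refine Finset.sum_nbij' φ ψ ?_ ?_ ?_ ?_ ?_
  · -- A → B
    intro p hp
    obtain ⟨hpU, hSi, hpos⟩ := Finset.mem_filter.1 hp
    obtain ⟨hF, hcard, hroot, hji⟩ := mem_forestsKji'.1 hSi
    have hmj : p.1 ≠ j := by
      intro h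
      rw [h, hloop j] at hpos
      exact lt_irrefl 0 hpos
    obtain ⟨hvmem, hεjv, hsp, hcard', hroot', hvi', hpar', hrec⟩ :=
      moveFwd hF hcard hroot hji hpos hmj
    simp only [hφ]
    refine Finset.mem_filter.2 ⟨?_, ?_, hεjv⟩
    · exact Finset.mem_product.2 ⟨Finset.mem_univ _, mem_forestsK'.2 ⟨hsp, hcard'⟩⟩
    · exact mem_forestsKji'.2 ⟨hsp, hcard', hroot', hvi'⟩
  · -- B → A
    intro p hp
    obtain ⟨hpU, hSk, hpos⟩ := Finset.mem_filter.1 hp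
    obtain ⟨hF, hcard, hrootk, hki⟩ := mem_forestsKji'.1 hSk
    have hjk : j ≠ p.1 := by
      intro h
      rw [← h, hloop j] at hpos
      exact lt_irrefl 0 hpos
    obtain ⟨hqmem, hqpos, hsp, hcard', hrootF, hjiF, hchld, hrec⟩ :=
      moveInv hF hcard hrootk hki hpos hjk
    simp only [hψ]
    refine Finset.mem_filter.2 ⟨?_, ?_, hqpos⟩
    · exact Finset.mem_product.2 ⟨Finset.mem_univ _, mem_forestsK'.2 ⟨hsp, hcard'⟩⟩
    · exact mem_forestsKji'.2 ⟨hsp, hcard', hrootF, hjiF⟩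
  · -- left inverse
    intro p hp
    obtain ⟨hpU, hSi, hpos⟩ := Finset.mem_filter.1 hp
    obtain ⟨hF, hcard, hroot, hji⟩ := mem_forestsKji'.1 hSi
    have hmj : p.1 ≠ j := by
      intro h
      rw [h, hloop j] at hpos
      exact lt_irrefl 0 hpos
    obtain ⟨hvmem, hεjv, hsp, hcard', hroot', hvi', hpar', hrec⟩ :=
      moveFwd hF hcard hroot hji hpos hmj
    simp only [hφ, hψ]
    rw [hpar', hrec]
  · -- right inverse
    intro p hp
    obtain ⟨hpU, hSk, hpos⟩ := Finset.mem_filter.1 hp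
    obtain ⟨hF, hcard, hrootk, hki⟩ := mem_forestsKji'.1 hSk
    have hjk : j ≠ p.1 := by
      intro h
      rw [← h, hloop j] at hpos
      exact lt_irrefl 0 hpos
    obtain ⟨hqmem, hqpos, hsp, hcard', hrootF, hjiF, hchld, hrec⟩ :=
      moveInv hF hcard hrootk hki hpos hjk
    simp only [hφ, hψ]
    rw [hchld, hrec]
  · -- values
    intro p hp
    obtain ⟨hpU, hSi, hpos⟩ := Finset.mem_filter.1 hp
    obtain ⟨hF, hcard, hroot, hji⟩ := mem_forestsKji'.1 hSi
    have hmj : p.1 ≠ j := by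
      intro h
      rw [h, hloop j] at hpos
      exact lt_irrefl 0 hpos
    obtain ⟨hvmem, hεjv, hsp, hcard', hroot', hvi', hpar', hrec⟩ :=
      moveFwd hF hcard hroot hji hpos hmj
    have hnb : (p.1, j) ∉ p.2.erase (j, chld p.2 j p.1) :=
      fun h => hroot p.1 (Finset.mem_of_mem_erase h)
    simp only [hφ]
    exact (weight_move hvmem hnb).symm

end Sums2

section Final

variable {ε : Fin n → Fin n → ℝ}

lemma maxArcs'_eq (ε : Fin n → Fin n → ℝ) : maxArcs' ε = maxArcs ε := rfl

lemma Kirchhoff_diag (ε : Fin n → Fin n → ℝ) (hloop : ∀ a, ε a a = 0) (i : Fin n) :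
    Kirchhoff ε i i = ∑ k : Fin n, ε k i := by
  rw [show Kirchhoff ε i i = ∑ k ∈ Finset.univ.filter (· ≠ i), ε k i from by
    simp [Kirchhoff]]
  rw [Finset.filter_ne',
    Finset.sum_erase (f := fun k => ε k i) Finset.univ (by show _ = _; beta_reduce; rw [hloop i])]

lemma Kirchhoff_off (ε : Fin n → Fin n → ℝ) {i k : Fin n} (h : i ≠ k) :
    Kirchhoff ε i k = - ε k i := by
  simp only [Kirchhoff, Matrix.of_apply, if_neg h]

lemma LQ (hnonneg : ∀ a b, 0 ≤ ε a b) (hloop : ∀ a, ε a a = 0) (i j : Fin n) :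
    ∑ k : Fin n, Kirchhoff ε i k * Qmax ε k j = 0 := by
  classical
  rw [← Finset.add_sum_erase _ (fun k => Kirchhoff ε i k * Qmax ε k j) (Finset.mem_univ i)]
  have h2 : ∑ k ∈ Finset.univ.erase i, Kirchhoff ε i k * Qmax ε k j
      = - ∑ k ∈ Finset.univ.erase i, ε k i * Qmax ε k j := by
    rw [← Finset.sum_neg_distrib]
    refine Finset.sum_congr rfl fun k hk => ?_
    rw [Kirchhoff_off ε (Ne.symm (Finset.mem_erase.1 hk).1), neg_mul]
  have e2 : ∑ k ∈ Finset.univ.erase i, ε k i * Qmax ε k j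
      = ∑ k : Fin n, ε k i * Qmax ε k j :=
    Finset.sum_erase (f := fun k => ε k i * Qmax ε k j) Finset.univ
      (by show _ = _; beta_reduce; rw [hloop i, zero_mul])
  rw [h2, Kirchhoff_diag ε hloop i, e2, Finset.sum_mul]
  have hkey := key1 (ε := ε) hnonneg i j
  rw [maxArcs'_eq] at hkey
  have hL : ∑ k : Fin n, ε k i * Qmax ε i j
      = ∑ k : Fin n, ε k i * Qmax ε k j := hkey
  rw [show (∑ k : Fin n, ε k i * Qmax ε i j) = ∑ k : Fin n, ε k i * Qmax ε k j from hL]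
  ring

lemma QL (hnonneg : ∀ a b, 0 ≤ ε a b) (hloop : ∀ a, ε a a = 0) (i j : Fin n) :
    ∑ k : Fin n, Qmax ε i k * Kirchhoff ε k j = 0 := by
  classical
  rw [← Finset.add_sum_erase _ (fun k => Qmax ε i k * Kirchhoff ε k j) (Finset.mem_univ j)]
  have h2 : ∑ k ∈ Finset.univ.erase j, Qmax ε i k * Kirchhoff ε k j
      = - ∑ k ∈ Finset.univ.erase j, ε j k * Qmax ε i k := by
    rw [← Finset.sum_neg_distrib]
    refine Finset.sum_congr rfl fun k hk => ?_
    rw [Kirchhoff_off ε (Finset.mem_erase.1 hk).1]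
    ring
  have e2 : ∑ k ∈ Finset.univ.erase j, ε j k * Qmax ε i k
      = ∑ k : Fin n, ε j k * Qmax ε i k :=
    Finset.sum_erase (f := fun k => ε j k * Qmax ε i k) Finset.univ
      (by show _ = _; beta_reduce; rw [hloop j, zero_mul])
  rw [h2, Kirchhoff_diag ε hloop j, e2, mul_comm (Qmax ε i j), Finset.sum_mul]
  have hkey := key2 (ε := ε) hnonneg hloop i j
  rw [maxArcs'_eq] at hkey
  have hL : ∑ m : Fin n, ε m j * Qmax ε i j
      = ∑ k : Fin n, ε j k * Qmax ε i k := hkey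
  rw [show (∑ m : Fin n, ε m j * Qmax ε i j) = ∑ k : Fin n, ε j k * Qmax ε i k from hL]
  ring

theorem stmt17' (ε : Fin n → Fin n → ℝ) (hnonneg : ∀ i j, 0 ≤ ε i j)
    (hloop : ∀ i, ε i i = 0) :
    Kirchhoff ε * Jbar ε = 0 ∧ Jbar ε * Kirchhoff ε = 0 := by
  have hKQ : Kirchhoff ε * Qmax ε = 0 := by
    ext i j
    rw [Matrix.mul_apply, Matrix.zero_apply]
    exact LQ hnonneg hloop i j
  have hQK : Qmax ε * Kirchhoff ε = 0 := by
    ext i j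
    rw [Matrix.mul_apply, Matrix.zero_apply]
    exact QL hnonneg hloop i j
  constructor
  · rw [Jbar, Matrix.mul_smul, hKQ, smul_zero]
  · rw [Jbar, Matrix.smul_mul, hQK, smul_zero]

end Final

/-- The Kirchhoff matrix annihilates the normalized matrix of maximum out forests. -/
theorem stmt17 (ε : Fin n → Fin n → ℝ) (hnonneg : ∀ i j, 0 ≤ ε i j)
    (hloop : ∀ i, ε i i = 0) :
    Kirchhoff ε * Jbar ε = 0 ∧ Jbar ε * Kirchhoff ε = 0 := by
  exact stmt17' ε hnonneg hloop
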